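/- If n_l < n_u, then for any two states s, s' in the search space S the graph distance between s and s' in the search space graph equals their Hamming distance HD(s, s'). -/

import Mathlib

/-!
A walk along single-bit flips changes the Hamming distance to a fixed target by at most one per
step, so no walk is shorter than the Hamming distance. Conversely, some bit on which `s` and `s'`
differ can always be flipped without leaving the weight window `[nl, nu]`: if all differing bits
point the same way, `HW s'` lies strictly beyond `HW s` in that direction and leaves room for the
flip; otherwise bits of both directions are available, and as `nl < nu` the weight `HW s` can
move down or up. Flipping such bits one at a time gives a walk of length `HD(s, s')`.
-/

/-- Hamming weight of a binary string: number of coordinates equal to `true`. -/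
def HW {N : ℕ} (s : Fin N → Bool) : ℕ :=
  (Finset.univ.filter fun i => s i = true).card

/-- The search space: binary strings of length `N` with Hamming weight in `[nl, nu]`. -/
def searchSpace (N nl nu : ℕ) : Finset (Fin N → Bool) :=
  Finset.univ.filter fun s => nl ≤ HW s ∧ HW s ≤ nu

/-- The search space graph: vertices are the states in the search space, with an edge
between two states iff their Hamming distance is 1. -/
def SearchGraph (N nl nu : ℕ) :
    SimpleGraph {s : Fin N → Bool // nl ≤ HW s ∧ HW s ≤ nu} where
  Adj s s' := hammingDist s.1 s'.1 = 1
  symm := ⟨fun s s' h => by simpa [hammingDist_comm] using h⟩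
  loopless := ⟨fun s h => by simp at h⟩

namespace SimpleGraph

variable {V : Type*} (G : SimpleGraph V) (d : V → V → ℕ)

theorem Walk.le_length_of_adj_le_succ (hself : ∀ v, d v v = 0)
    (hadj : ∀ {u v w}, G.Adj u v → d u w ≤ d v w + 1) {u v : V} (p : G.Walk u v) :
    d u v ≤ p.length := by
  induction p with
  | nil => simp [hself]
  | cons h p ih => exact (hadj h).trans (by simpa using ih)

theorem exists_walk_length_eq_of_exists_adj (hzero : ∀ {u v}, d u v = 0 → u = v)
    (hstep : ∀ {u v}, d u v ≠ 0 → ∃ w, G.Adj u w ∧ d w v + 1 = d u v) (u v : V) :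
    ∃ p : G.Walk u v, p.length = d u v := by
  suffices ∀ n u, d u v = n → ∃ p : G.Walk u v, p.length = n from this _ u rfl
  intro n
  induction n with
  | zero =>
    intro u hu
    obtain rfl := hzero hu
    exact ⟨.nil, rfl⟩
  | succ n ih =>
    intro u hu
    obtain ⟨w, huw, hw⟩ := hstep (u := u) (v := v) (by omega)
    obtain ⟨p, hp⟩ := ih w (by omega)
    exact ⟨.cons huw p, by simp [hp]⟩

theorem dist_eq_of_adj_le_succ_of_exists_adj (hself : ∀ v, d v v = 0)
    (hadj : ∀ {u v w}, G.Adj u v → d u w ≤ d v w + 1) (hzero : ∀ {u v}, d u v = 0 → u = v)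
    (hstep : ∀ {u v}, d u v ≠ 0 → ∃ w, G.Adj u w ∧ d w v + 1 = d u v) (u v : V) :
    G.dist u v = d u v := by
  obtain ⟨p, hp⟩ := G.exists_walk_length_eq_of_exists_adj d hzero hstep u v
  obtain ⟨q, hq⟩ := p.reachable.exists_walk_length_eq_dist
  exact le_antisymm (hp ▸ dist_le p) (hq ▸ q.le_length_of_adj_le_succ G d hself hadj)

end SimpleGraph

section hammingDist

variable {ι : Type*} {β : ι → Type*} [Fintype ι] [DecidableEq ι] [∀ i, DecidableEq (β i)]

theorem hammingDist_update_add_one {x y : ∀ i, β i} {i : ι} (h : x i ≠ y i) :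
    hammingDist (Function.update x i (y i)) y + 1 = hammingDist x y := by
  have hset : (Finset.univ.filter fun j => Function.update x i (y i) j ≠ y j)
      = (Finset.univ.filter fun j => x j ≠ y j).erase i := by
    ext j
    by_cases hj : j = i <;> simp [hj]
  rw [hammingDist, hset]
  exact Finset.card_erase_add_one (by simpa using h)

theorem hammingDist_update_of_ne {x : ∀ i, β i} {i : ι} {b : β i} (h : x i ≠ b) :
    hammingDist x (Function.update x i b) = 1 := by
  simpa [eq_comm] using
    hammingDist_update_add_one (x := x) (i := i) (y := Function.update x i b) (by simpa using h)

end hammingDist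

section HW

variable {N : ℕ}

theorem HW_strictMono : StrictMono (HW (N := N)) := by
  intro s t hst
  obtain ⟨hle, i, hi⟩ := Pi.lt_def.1 hst
  obtain ⟨hsi, hti⟩ := Bool.lt_iff.1 hi
  refine Finset.card_lt_card ((Finset.ssubset_iff_of_subset ?_).2 ⟨i, ?_, ?_⟩)
  · intro j
    simpa using Bool.le_iff_imp.1 (hle j)
  · simp [hti]
  · simp [hsi]

theorem HW_update_true {s : Fin N → Bool} {i : Fin N} (h : s i = false) :
    HW (Function.update s i true) = HW s + 1 := by
  have hset : (Finset.univ.filter fun j => Function.update s i true j = true)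
      = insert i (Finset.univ.filter fun j => s j = true) := by
    ext j
    by_cases hj : j = i <;> simp [hj]
  rw [HW, hset]
  exact Finset.card_insert_of_notMem (by simp [h])

theorem HW_update_false {s : Fin N → Bool} {i : Fin N} (h : s i = true) :
    HW (Function.update s i false) + 1 = HW s := by
  have hset : (Finset.univ.filter fun j => Function.update s i false j = true)
      = (Finset.univ.filter fun j => s j = true).erase i := by
    ext j
    by_cases hj : j = i <;> simp [hj]
  rw [HW, hset]
  exact Finset.card_erase_add_one (by simp [h])

theorem exists_ne_HW_update_mem_Icc {nl nu : ℕ} (hlu : nl < nu) {s s' : Fin N → Bool}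
    (hs : HW s ∈ Set.Icc nl nu) (hs' : HW s' ∈ Set.Icc nl nu) (hne : s ≠ s') :
    ∃ i, s i ≠ s' i ∧ HW (Function.update s i (s' i)) ∈ Set.Icc nl nu := by
  have flip_up (i : Fin N) (hi : s i = false) (hi' : s' i = true) (hlt : HW s < nu) :
      ∃ i, s i ≠ s' i ∧ HW (Function.update s i (s' i)) ∈ Set.Icc nl nu := by
    refine ⟨i, by simp [hi, hi'], ?_⟩
    rw [hi', HW_update_true hi]
    exact ⟨by linarith [hs.1], hlt⟩
  have flip_down (i : Fin N) (hi : s i = true) (hi' : s' i = false) (hlt : nl < HW s) :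
      ∃ i, s i ≠ s' i ∧ HW (Function.update s i (s' i)) ∈ Set.Icc nl nu := by
    refine ⟨i, by simp [hi, hi'], ?_⟩
    have := HW_update_false hi
    rw [hi']
    exact ⟨by omega, by linarith [hs.2]⟩
  by_cases hle : s ≤ s'
  · have hlt := lt_of_le_of_ne hle hne
    obtain ⟨i, hi⟩ := (Pi.lt_def.1 hlt).2
    obtain ⟨hsi, hs'i⟩ := Bool.lt_iff.1 hi
    exact flip_up i hsi hs'i ((HW_strictMono hlt).trans_le hs'.2)
  by_cases hge : s' ≤ s
  · have hlt := lt_of_le_of_ne hge hne.symm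
    obtain ⟨i, hi⟩ := (Pi.lt_def.1 hlt).2
    obtain ⟨hs'i, hsi⟩ := Bool.lt_iff.1 hi
    exact flip_down i hsi hs'i (hs'.1.trans_lt (HW_strictMono hlt))
  simp only [Pi.le_def, not_forall, not_le, Bool.lt_iff] at hle hge
  obtain ⟨i, hs'i, hsi⟩ := hle
  obtain ⟨j, hsj, hs'j⟩ := hge
  rcases lt_or_ge nl (HW s) with hlt | hge
  · exact flip_down i hsi hs'i hlt
  · exact flip_up j hsj hs'j (by omega)

end HW

theorem searchGraph_dist_eq_hammingDist_general (N nl nu : ℕ) (h1 : nl < nu)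
    (s s' : {s : Fin N → Bool // nl ≤ HW s ∧ HW s ≤ nu}) :
    (SearchGraph N nl nu).dist s s' = hammingDist s.1 s'.1 := by
  refine SimpleGraph.dist_eq_of_adj_le_succ_of_exists_adj _ (fun u v => hammingDist u.1 v.1)
    (fun _ => hammingDist_self _) ?adj (fun h => Subtype.ext (hammingDist_eq_zero.1 h)) ?step s s'
  case adj =>
    intro u v w (huv : hammingDist u.1 v.1 = 1)
    linarith [hammingDist_triangle u.1 v.1 w.1]
  case step =>
    intro u v huv
    obtain ⟨i, hi, hmem⟩ := exists_ne_HW_update_mem_Icc h1 u.2 v.2 (hammingDist_ne_zero.1 huv)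
    exact ⟨⟨_, hmem⟩, hammingDist_update_of_ne hi, hammingDist_update_add_one hi⟩

/-- If `n_l < n_u`, the graph distance between any two states of the
search space graph equals their Hamming distance. -/
theorem searchGraph_dist_eq_hammingDist (N nl nu : ℕ) (h1 : nl < nu) (h2 : nu ≤ N)
    (s s' : {s : Fin N → Bool // nl ≤ HW s ∧ HW s ≤ nu}) :
    (SearchGraph N nl nu).dist s s' = hammingDist s.1 s'.1 :=
  searchGraph_dist_eq_hammingDist_general N nl nu h1 s s'
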